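/- For every μ > 0 and M > 0 there exists λ₀ ≥ 1 such that for all λ ≥ λ₀, all ρ ≥ 0, and all a, b ∈ [0, M]: exp(−(2 + 3μ)·ρ·(e^{2λM} − e^{λa})) ≤ exp(−(2 + 2μ)·ρ·(e^{2λM} − e^{λb})). -/
import Mathlib


/-- Pointwise comparison of the Carleman exponentials: for every `μ, M > 0`
there is `λ₀ ≥ 1` such that for all `λ ≥ λ₀`, `ρ ≥ 0` and `a, b ∈ [0,M]`,
`exp(−(2+3μ)ρ(e^{2λM} − e^{λa})) ≤ exp(−(2+2μ)ρ(e^{2λM} − e^{λb}))`. -/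
theorem carleman_exponential_comparison (μ M : ℝ) (hμ : 0 < μ) (hM : 0 < M) :
    ∃ lam₀ : ℝ, 1 ≤ lam₀ ∧
      ∀ lam ≥ lam₀, ∀ ρ ≥ (0 : ℝ), ∀ a ∈ Set.Icc (0 : ℝ) M, ∀ b ∈ Set.Icc (0 : ℝ) M,
        Real.exp (-((2 + 3 * μ) * ρ * (Real.exp (2 * lam * M) - Real.exp (lam * a)))) ≤
          Real.exp (-((2 + 2 * μ) * ρ * (Real.exp (2 * lam * M) - Real.exp (lam * b)))) := by
  refine ⟨max 1 (Real.log ((2 + 3 * μ) / μ) / M), le_max_left _ _, ?_⟩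
  intro lam hlam ρ hρ a ha b hb
  rw [Real.exp_le_exp, neg_le_neg_iff]
  have hμ3 : (0:ℝ) < 2 + 3 * μ := by linarith
  have hμ2 : (0:ℝ) < 2 + 2 * μ := by linarith
  have hlog : Real.log ((2 + 3 * μ) / μ) / M ≤ lam := le_trans (le_max_right _ _) hlam
  have heM : (2 + 3 * μ) / μ ≤ Real.exp (lam * M) := by
    calc (2 + 3 * μ) / μ ≤ Real.exp (Real.log ((2 + 3 * μ) / μ)) :=
          (Real.exp_log (by positivity)).ge
      _ ≤ Real.exp (lam * M) := by
          apply Real.exp_le_exp.mpr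
          have := (div_le_iff₀ hM).mp hlog
          linarith
  -- exp(λa) ≤ exp(λM)
  have hlam1 : (1:ℝ) ≤ lam := le_trans (le_max_left _ _) hlam
  have hea : Real.exp (lam * a) ≤ Real.exp (lam * M) :=
    Real.exp_le_exp.mpr (by nlinarith [ha.2, ha.1])
  have heb0 : (0:ℝ) < Real.exp (lam * b) := Real.exp_pos _
  have hE2 : Real.exp (2 * lam * M) = Real.exp (lam * M) * Real.exp (lam * M) := by
    rw [← Real.exp_add]; ring_nf
  have key : (2 + 2 * μ) * (Real.exp (2 * lam * M) - Real.exp (lam * b)) ≤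
      (2 + 3 * μ) * (Real.exp (2 * lam * M) - Real.exp (lam * a)) := by
    have h1 : (2 + 2 * μ) * (Real.exp (2 * lam * M) - Real.exp (lam * b)) ≤
        (2 + 2 * μ) * Real.exp (2 * lam * M) := by nlinarith
    have hM1 : (0:ℝ) < Real.exp (lam * M) := Real.exp_pos _
    have h2 : (2 + 2 * μ) * Real.exp (2 * lam * M) ≤
        (2 + 3 * μ) * (Real.exp (2 * lam * M) - Real.exp (lam * M)) := by
      have : (2 + 3 * μ) ≤ μ * Real.exp (lam * M) := by
        have := (div_le_iff₀ hμ).mp heM; linarith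
      nlinarith
    have h3 : (2 + 3 * μ) * (Real.exp (2 * lam * M) - Real.exp (lam * M)) ≤
        (2 + 3 * μ) * (Real.exp (2 * lam * M) - Real.exp (lam * a)) := by nlinarith
    linarith
  calc (2 + 2 * μ) * ρ * (Real.exp (2 * lam * M) - Real.exp (lam * b))
      = ρ * ((2 + 2 * μ) * (Real.exp (2 * lam * M) - Real.exp (lam * b))) := by ring
    _ ≤ ρ * ((2 + 3 * μ) * (Real.exp (2 * lam * M) - Real.exp (lam * a))) :=
        mul_le_mul_of_nonneg_left key hρ
    _ = (2 + 3 * μ) * ρ * (Real.exp (2 * lam * M) - Real.exp (lam * a)) := by ring
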